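/- Let a ∈ ℝ and define A(t) as the 2×2 matrix with rows (1, t) and (0, a). Then the iterated Peano–Baker integrals with base point t₀ = 0 are given explicitly by: I_n(t) is the 2×2 matrix with rows (tⁿ/n!, t^{n+1}/(n+1)! · α_n) and (0, (a t)ⁿ/n!), where α_n = Σ_{ℓ=1}^n ℓ · a^{ℓ−1}. -/

import Mathlib

/-!
Every `A τ * I_n τ` is upper triangular with polynomial entries, so `I_{n+1}` is computed
entrywise by induction on `n`. In the `(0, 1)` entry the product contributes
`τ * (a τ)ⁿ / n! = τⁿ⁺¹ / (n+1)! * (n+1) aⁿ`, which is exactly the new summand of `α_{n+1}`.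
-/

attribute [local instance] Matrix.normedAddCommGroup Matrix.normedSpace

/-- The iterated Peano–Baker integrals with base point `0`: `pbIter A 0 = 1` (identity
matrix) and `pbIter A (n+1) t = ∫_0^t A τ * pbIter A n τ dτ`. -/
noncomputable def pbIter (A : ℝ → Matrix (Fin 2) (Fin 2) ℝ) :
    ℕ → ℝ → Matrix (Fin 2) (Fin 2) ℝ
  | 0 => fun _ => 1
  | n + 1 => fun t => ∫ τ in (0 : ℝ)..t, A τ * pbIter A n τ

-- Instance search does not reach this through the local normed structure on matrices,
-- and `IntervalIntegrable` needs it.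
noncomputable instance Matrix.instENormedAddMonoid {m n : Type*} [Fintype m] [Fintype n] :
    ENormedAddMonoid (Matrix m n ℝ) :=
  NormedAddGroup.toENormedAddMonoid

theorem Matrix.intervalIntegral_apply {m n : Type*} [Fintype m] [Fintype n] {a b : ℝ}
    {M : ℝ → Matrix m n ℝ} (hM : IntervalIntegrable M MeasureTheory.volume a b)
    (i : m) (j : n) :
    (∫ τ in a..b, M τ) i j = ∫ τ in a..b, M τ i j :=
  ((Matrix.entryLinearMap ℝ ℝ i j).toContinuousLinearMap.intervalIntegral_comp_comm hM).symm

theorem Matrix.intervalIntegral_of_fin_two {a b : ℝ} {f g h k : ℝ → ℝ} (hf : Continuous f)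
    (hg : Continuous g) (hh : Continuous h) (hk : Continuous k) :
    ∫ τ in a..b, !![f τ, g τ; h τ, k τ] =
      !![∫ τ in a..b, f τ, ∫ τ in a..b, g τ; ∫ τ in a..b, h τ, ∫ τ in a..b, k τ] := by
  have hM : Continuous fun τ => !![f τ, g τ; h τ, k τ] := by fun_prop
  ext i j
  rw [Matrix.intervalIntegral_apply (hM.intervalIntegrable a b)]
  fin_cases i <;> fin_cases j <;> rfl

theorem integral_pow_div_factorial (n : ℕ) (t : ℝ) :
    ∫ τ in (0 : ℝ)..t, τ ^ n / n.factorial = t ^ (n + 1) / (n + 1).factorial := by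
  rw [intervalIntegral.integral_div, integral_pow, Nat.factorial_succ]
  push_cast
  field_simp
  ring

theorem stmt17 (a : ℝ) (A : ℝ → Matrix (Fin 2) (Fin 2) ℝ)
    (hA : ∀ t, A t = !![1, t; 0, a]) :
    ∀ (n : ℕ) (t : ℝ),
      pbIter A n t =
        !![t ^ n / n.factorial,
            t ^ (n + 1) / (n + 1).factorial * ∑ ℓ ∈ Finset.Icc 1 n, (ℓ : ℝ) * a ^ (ℓ - 1);
          0, (a * t) ^ n / n.factorial] := by
  intro n
  induction n with
  | zero =>
    intro t
    simp [pbIter, Matrix.one_fin_two]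
  | succ n ih =>
    intro t
    set S := ∑ ℓ ∈ Finset.Icc 1 n, (ℓ : ℝ) * a ^ (ℓ - 1)
    have sum_succ : ∑ ℓ ∈ Finset.Icc 1 (n + 1), (ℓ : ℝ) * a ^ (ℓ - 1) = S + (n + 1) * a ^ n := by
      rw [Finset.sum_Icc_succ_top (by omega)]
      push_cast
      rfl
    have integrand (τ : ℝ) : A τ * pbIter A n τ =
        !![τ ^ n / n.factorial, τ ^ (n + 1) / (n + 1).factorial * (S + (n + 1) * a ^ n);
          0, a ^ (n + 1) * (τ ^ n / n.factorial)] := by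
      rw [hA, ih, Matrix.mul_fin_two, Nat.factorial_succ]
      ext i j
      fin_cases i <;> fin_cases j <;> simp <;> field_simp <;> ring
    show ∫ τ in (0 : ℝ)..t, A τ * pbIter A n τ = _
    simp_rw [integrand]
    rw [Matrix.intervalIntegral_of_fin_two (by fun_prop) (by fun_prop) continuous_const
      (by fun_prop)]
    simp only [intervalIntegral.integral_mul_const, intervalIntegral.integral_const_mul,
      intervalIntegral.integral_zero, integral_pow_div_factorial, sum_succ, mul_pow,
      mul_div_assoc]
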